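/- arXiv:2501.13695 — 9 statements merged into one kernel-verified Lean document; each statement's English description precedes it below -/
import Mathlib

section
/- Let f : ℝ≥0 → ℝ be continuous. If f satisfies f(x+y+z) + f(z) ≥ f(x+z) + f(y+z) for all x, y, z ≥ 0, then f is convex on [0,∞). -/
/-!
Taking `x = y = (v - u) / 2` and `z = u` shows that `f` is midpoint convex on `[0, ∞)`, and a
continuous midpoint convex function is convex: on a segment, `f` minus its chord is continuous and
midpoint convex, so were it positive somewhere, at the leftmost point `s` of its maximum the
midpoint inequality for `s ± δ` would force the value at `s` strictly below the maximum.
-/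

open Set AffineMap

theorem nonpos_on_Icc_of_map_midpoint_le {g : ℝ → ℝ} (hg : ContinuousOn g (Icc 0 1))
    (hmid : ∀ s ∈ Icc (0 : ℝ) 1, ∀ t ∈ Icc (0 : ℝ) 1,
      g (midpoint ℝ s t) ≤ midpoint ℝ (g s) (g t))
    (h0 : g 0 ≤ 0) (h1 : g 1 ≤ 0) : ∀ t ∈ Icc (0 : ℝ) 1, g t ≤ 0 := by
  by_contra! ⟨t, ht, hgt⟩
  obtain ⟨c, hc, hmax⟩ := isCompact_Icc.exists_isMaxOn ⟨t, ht⟩ hg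
  have hpos : 0 < g c := hgt.trans_le (hmax ht)
  set K := Icc (0 : ℝ) 1 ∩ g ⁻¹' {g c}
  have hK : IsCompact K := isCompact_Icc.of_isClosed_subset
    (hg.preimage_isClosed_of_isClosed isClosed_Icc isClosed_singleton) inter_subset_left
  obtain ⟨hs, hgs⟩ : sInf K ∈ K := hK.sInf_mem ⟨c, hc, rfl⟩
  set s := sInf K
  replace hgs : g s = g c := hgs
  have hs0 : 0 < s := hs.1.lt_of_ne (fun h ↦ by rw [← h] at hgs; linarith)
  have hs1 : s < 1 := hs.2.lt_of_ne (fun h ↦ by rw [h] at hgs; linarith)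
  set δ := min s (1 - s)
  have hδ : 0 < δ := lt_min hs0 (by linarith)
  have hl : s - δ ∈ Icc (0 : ℝ) 1 := ⟨by linarith [min_le_left s (1 - s)], by linarith⟩
  have hr : s + δ ∈ Icc (0 : ℝ) 1 := ⟨by linarith, by linarith [min_le_right s (1 - s)]⟩
  have hleft : g (s - δ) < g c := (hmax hl).lt_of_ne fun h ↦ by
    linarith [csInf_le hK.bddBelow (⟨hl, h⟩ : s - δ ∈ K)]
  have hmid_s := hmid _ hl _ hr
  simp only [midpoint_eq_smul_add, smul_eq_mul, invOf_eq_inv] at hmid_s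
  rw [show 2⁻¹ * (s - δ + (s + δ)) = s by ring] at hmid_s
  have hright : g (s + δ) ≤ g c := hmax hr
  linarith

theorem convexOn_of_map_midpoint_le {E : Type*} [AddCommGroup E] [Module ℝ E]
    [TopologicalSpace E] [IsTopologicalAddGroup E] [ContinuousSMul ℝ E] {s : Set E} {f : E → ℝ}
    (hs : Convex ℝ s) (hf : ContinuousOn f s)
    (hmid : ∀ x ∈ s, ∀ y ∈ s, f (midpoint ℝ x y) ≤ midpoint ℝ (f x) (f y)) :
    ConvexOn ℝ s f := by
  refine ⟨hs, fun x hx y hy a b ha hb hab ↦ ?_⟩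
  set g : ℝ → ℝ := fun t ↦ f (lineMap x y t) - lineMap (f x) (f y) t
  have hg : ContinuousOn g (Icc 0 1) :=
    (hf.comp lineMap_continuous.continuousOn fun _ ↦ hs.lineMap_mem hx hy).sub
      lineMap_continuous.continuousOn
  have hgmid : ∀ p ∈ Icc (0 : ℝ) 1, ∀ q ∈ Icc (0 : ℝ) 1,
      g (midpoint ℝ p q) ≤ midpoint ℝ (g p) (g q) := by
    intro p hp q hq
    have := hmid _ (hs.lineMap_mem hx hy hp) _ (hs.lineMap_mem hx hy hq)
    simp only [g, AffineMap.map_midpoint]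
    simp only [midpoint_eq_smul_add, smul_eq_mul, invOf_eq_inv] at this ⊢
    linarith
  have hchord := nonpos_on_Icc_of_map_midpoint_le hg hgmid (by simp [g]) (by simp [g]) b
    ⟨hb, by linarith⟩
  obtain rfl : a = 1 - b := by linarith
  simpa [g, lineMap_apply_module, smul_eq_mul, sub_nonpos] using hchord

theorem map_midpoint_le_of_second_difference_nonneg {f : ℝ → ℝ}
    (h : ∀ x y z : ℝ, 0 ≤ x → 0 ≤ y → 0 ≤ z → f (x + z) + f (y + z) ≤ f (x + y + z) + f z)
    {u v : ℝ} (hu : 0 ≤ u) (hv : 0 ≤ v) : f (midpoint ℝ u v) ≤ midpoint ℝ (f u) (f v) := by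
  wlog huv : u ≤ v generalizing u v
  · simpa only [midpoint_comm] using this hv hu (le_of_not_ge huv)
  have := h ((v - u) / 2) ((v - u) / 2) u (by linarith) (by linarith) hu
  rw [show (v - u) / 2 + (v - u) / 2 + u = v by ring] at this
  simp only [midpoint_eq_smul_add, smul_eq_mul, invOf_eq_inv]
  rw [show 2⁻¹ * (u + v) = (v - u) / 2 + u by ring]
  linarith

theorem stmt_1 (f : ℝ → ℝ) (hf : ContinuousOn f (Set.Ici 0))
    (h : ∀ x y z : ℝ, 0 ≤ x → 0 ≤ y → 0 ≤ z →
      f (x + z) + f (y + z) ≤ f (x + y + z) + f z) :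
    ConvexOn ℝ (Set.Ici 0) f :=
  convexOn_of_map_midpoint_le (convex_Ici 0) hf fun _ hu _ hv ↦
    map_midpoint_le_of_second_difference_nonneg h hu hv
end

section
/- If f : ℝ≥0 → ℝ is α-strongly convex (i.e., f − (α/2)x² is convex) with f(0) ≤ 0, then f(x+y+z) + f(z) ≥ f(x+z) + f(y+z) + αxy for all x, y, z ≥ 0. -/
/-!
Put `g x = f x - α / 2 * x ^ 2`. Since `z ≤ x + z, y + z ≤ x + y + z` and both pairs have the same
sum, convexity of `g` gives `g (x + z) + g (y + z) ≤ g z + g (x + y + z)` (each inner point is a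
convex combination of the outer ones, with swapped weights). The quadratic parts differ by exactly
`α / 2 * ((x + y + z) ^ 2 + z ^ 2 - (x + z) ^ 2 - (y + z) ^ 2) = α * x * y`.
-/

theorem ConvexOn.map_add_map_le_of_add_eq {𝕜 β : Type*} [Field 𝕜] [LinearOrder 𝕜]
    [IsStrictOrderedRing 𝕜] [AddCommMonoid β] [PartialOrder β] [IsOrderedAddMonoid β]
    [Module 𝕜 β] {s : Set 𝕜} {f : 𝕜 → β} (hf : ConvexOn 𝕜 s f) {p q u v : 𝕜}
    (hp : p ∈ s) (hq : q ∈ s) (hpu : p ≤ u) (huq : u ≤ q) (hsum : u + v = p + q) :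
    f u + f v ≤ f p + f q := by
  rcases hpu.eq_or_lt with rfl | hpu'
  · obtain rfl : v = q := by linarith
    exact le_rfl
  have hpq : 0 < q - p := by linarith
  have hpq' : q - p ≠ 0 := hpq.ne'
  obtain rfl : v = p + q - u := by linarith
  set a := (q - u) / (q - p)
  set b := (u - p) / (q - p)
  have ha : 0 ≤ a := div_nonneg (by linarith) hpq.le
  have hb : 0 ≤ b := div_nonneg (by linarith) hpq.le
  have hab : a + b = 1 := by rw [← add_div, div_eq_one_iff_eq hpq']; ring
  have hu : a • p + b • q = u := by simp only [smul_eq_mul, a, b]; field_simp; ring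
  have hv : b • p + a • q = p + q - u := by
    simp only [smul_eq_mul, a, b]; field_simp; ring
  calc f u + f (p + q - u)
      ≤ (a • f p + b • f q) + (b • f p + a • f q) := by
        rw [← hv, ← hu]
        exact add_le_add (hf.2 hp hq ha hb hab) (hf.2 hp hq hb ha (by rw [add_comm, hab]))
    _ = (a + b) • f p + (a + b) • f q := by rw [add_smul, add_smul]; abel
    _ = f p + f q := by rw [hab, one_smul, one_smul]

theorem stmt_6_general (f : ℝ → ℝ) (α : ℝ)
    (hconv : ConvexOn ℝ (Set.Ici 0) (fun x => f x - α / 2 * x ^ 2)) :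
    ∀ x y z : ℝ, 0 ≤ x → 0 ≤ y → 0 ≤ z →
      f (x + z) + f (y + z) + α * x * y ≤ f (x + y + z) + f z := by
  intro x y z hx hy hz
  have key := hconv.map_add_map_le_of_add_eq (q := x + y + z) (u := x + z) (v := y + z)
    (Set.mem_Ici.2 hz) (Set.mem_Ici.2 (by positivity))
    (by linarith) (by linarith) (by ring)
  linear_combination key

theorem stmt_6 (f : ℝ → ℝ) (α : ℝ) (hα : 0 < α)
    (hconv : ConvexOn ℝ (Set.Ici 0) (fun x => f x - α / 2 * x ^ 2))
    (h0 : f 0 ≤ 0) :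
    ∀ x y z : ℝ, 0 ≤ x → 0 ≤ y → 0 ≤ z →
      f (x + z) + f (y + z) + α * x * y ≤ f (x + y + z) + f z :=
  stmt_6_general f α hconv
end

section
/- For all real numbers x, y, z ≥ 0, the double inequality e^{xy} ≥ (1+z)(1+x+y+z) / ((1+x+z)(1+y+z)) ≥ e^{−xy} holds. -/
/-! The numerator `a = (1 + z) * (1 + x + y + z)` is at least `1`, and the denominator exceeds it
by exactly `x * y`. So the quotient is `a / (a + t)` with `t = x * y ≥ 0`, which lies between
`1 / (1 + t) ≥ exp (-t)` and `1 ≤ exp t`. -/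

open Real

lemma exp_neg_le_div_add {a t : ℝ} (ha : 1 ≤ a) (ht : 0 ≤ t) : exp (-t) ≤ a / (a + t) :=
  calc exp (-t) = (exp t)⁻¹ := exp_neg t
    _ ≤ (t + 1)⁻¹ := inv_anti₀ (by positivity) (add_one_le_exp t)
    _ ≤ a / (a + t) := by
      rw [inv_eq_one_div, div_le_div_iff₀ (by positivity) (by positivity)]
      nlinarith

lemma div_add_le_exp {a t : ℝ} (ha : 0 < a) (ht : 0 ≤ t) : a / (a + t) ≤ exp t :=
  (div_le_one_of_le₀ (by linarith) (by positivity)).trans (one_le_exp ht)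

theorem stmt_7 (x y z : ℝ) (hx : 0 ≤ x) (hy : 0 ≤ y) (hz : 0 ≤ z) :
    Real.exp (-(x * y)) ≤
      (1 + z) * (1 + x + y + z) / ((1 + x + z) * (1 + y + z)) ∧
    (1 + z) * (1 + x + y + z) / ((1 + x + z) * (1 + y + z)) ≤ Real.exp (x * y) := by
  have hden : (1 + x + z) * (1 + y + z) = (1 + z) * (1 + x + y + z) + x * y := by ring
  have hnum : 1 ≤ (1 + z) * (1 + x + y + z) := by nlinarith
  have hxy : 0 ≤ x * y := mul_nonneg hx hy
  rw [hden]
  exact ⟨exp_neg_le_div_add hnum hxy, div_add_le_exp (by linarith) hxy⟩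
end

section
/- The Shannon entropy Φ(x) = −∑_{k=1}^{n} x_k log x_k is strongly subadditive on the positive orthant of ℝⁿ: for all x, y, z with nonnegative coordinates, Φ(x+y+z) + Φ(z) ≤ Φ(x+z) + Φ(y+z), and Φ(x+y) ≤ Φ(x) + Φ(y). -/
/-!
`negMulLog` is concave on `[0, ∞)`, and for a concave `f` both `a + c` and `b + c` are convex
combinations of `c` and `a + b + c` with swapped weights; adding the two concavity inequalities gives
`f (a + b + c) + f c ≤ f (a + c) + f (b + c)`. Summing over coordinates gives strong
subadditivity of the entropy, and `z = 0` gives subadditivity since `negMulLog 0 = 0`.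
-/

open Real

theorem ConcaveOn.map_add_add_add_map_le {𝕜 : Type*} [Field 𝕜] [LinearOrder 𝕜]
    [IsStrictOrderedRing 𝕜] {s : Set 𝕜} {f : 𝕜 → 𝕜} (hf : ConcaveOn 𝕜 s f) {a b c : 𝕜}
    (hc : c ∈ s) (habc : a + b + c ∈ s) (ha : 0 ≤ a) (hb : 0 ≤ b) :
    f (a + b + c) + f c ≤ f (a + c) + f (b + c) := by
  rcases (add_nonneg ha hb).eq_or_lt with hab | hab
  · obtain rfl : a = 0 := by linarith
    obtain rfl : b = 0 := by linarith
    simp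
  have hw : a / (a + b) + b / (a + b) = 1 := by field_simp
  have hac := hf.2 habc hc (by positivity) (by positivity) hw
  have hbc := hf.2 habc hc (by positivity) (by positivity) ((add_comm _ _).trans hw)
  have eac : a / (a + b) * (a + b + c) + b / (a + b) * c = a + c := by field_simp; ring
  have ebc : b / (a + b) * (a + b + c) + a / (a + b) * c = b + c := by field_simp; ring
  simp only [smul_eq_mul, eac, ebc] at hac hbc
  linear_combination hac + hbc - (f (a + b + c) + f c) * hw

theorem sum_negMulLog_add_add_add_le {ι : Type*} [Fintype ι] {x y z : ι → ℝ}
    (hx : ∀ k, 0 ≤ x k) (hy : ∀ k, 0 ≤ y k) (hz : ∀ k, 0 ≤ z k) :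
    ∑ k, negMulLog (x k + y k + z k) + ∑ k, negMulLog (z k)
      ≤ ∑ k, negMulLog (x k + z k) + ∑ k, negMulLog (y k + z k) := by
  simp only [← Finset.sum_add_distrib]
  refine Finset.sum_le_sum fun k _ => concaveOn_negMulLog.map_add_add_add_map_le ?_ ?_
    (hx k) (hy k)
  · exact Set.mem_Ici.2 (hz k)
  · exact Set.mem_Ici.2 (by linarith [hx k, hy k, hz k])

theorem stmt_9 (n : ℕ) (Φ : (Fin n → ℝ) → ℝ)
    (hΦ : ∀ x : Fin n → ℝ, Φ x = ∑ k, Real.negMulLog (x k)) :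
    (∀ x y z : Fin n → ℝ, (∀ k, 0 ≤ x k) → (∀ k, 0 ≤ y k) → (∀ k, 0 ≤ z k) →
      Φ (x + y + z) + Φ z ≤ Φ (x + z) + Φ (y + z)) ∧
    (∀ x y : Fin n → ℝ, (∀ k, 0 ≤ x k) → (∀ k, 0 ≤ y k) →
      Φ (x + y) ≤ Φ x + Φ y) := by
  have strong : ∀ x y z : Fin n → ℝ, (∀ k, 0 ≤ x k) → (∀ k, 0 ≤ y k) → (∀ k, 0 ≤ z k) →
      Φ (x + y + z) + Φ z ≤ Φ (x + z) + Φ (y + z) := fun x y z hx hy hz => by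
    simpa only [hΦ, Pi.add_apply] using sum_negMulLog_add_add_add_le hx hy hz
  refine ⟨strong, fun x y hx hy => ?_⟩
  simpa [hΦ] using strong x y 0 hx hy fun _ => le_rfl
end

section
/- For p ∈ (1,∞), the function Φ(f) = ∫ |f|^p is strongly superadditive on the cone of nonnegative functions in L^p(ℝ): for all f, g, h ∈ L^p(ℝ) with f, g, h ≥ 0 a.e., ∫(f+g+h)^p + ∫h^p ≥ ∫(f+h)^p + ∫(g+h)^p. -/
/-!
Pointwise, `(a + c) ^ p + (b + c) ^ p ≤ (a + b + c) ^ p + c ^ p` for `a, b, c ≥ 0`: the increments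
of a convex function increase, since `a + c` and `b + c` are the convex combinations of `c` and
`a + b + c` with weights `(b, a) / (a + b)` and `(a, b) / (a + b)`. Integrating this inequality gives
the theorem, all four integrands being integrable because the functions lie in `L^p`.
-/

open MeasureTheory Set

theorem ConvexOn.map_add_add_map_add_le {𝕜 : Type*} [Field 𝕜] [LinearOrder 𝕜]
    [IsStrictOrderedRing 𝕜] {s : Set 𝕜} {φ : 𝕜 → 𝕜} (hφ : ConvexOn 𝕜 s φ) {a b c : 𝕜}
    (ha : 0 ≤ a) (hb : 0 ≤ b) (hc : c ∈ s) (habc : a + b + c ∈ s) :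
    φ (a + c) + φ (b + c) ≤ φ (a + b + c) + φ c := by
  rcases (add_nonneg ha hb).eq_or_lt with hab | hab
  · obtain ⟨rfl, rfl⟩ : a = 0 ∧ b = 0 := ⟨by linarith, by linarith⟩
    simp
  have hw : b / (a + b) + a / (a + b) = 1 := by field_simp; ring
  have hac := hφ.2 hc habc (div_nonneg hb hab.le) (div_nonneg ha hab.le) hw
  have hbc := hφ.2 hc habc (div_nonneg ha hab.le) (div_nonneg hb hab.le)
    ((add_comm _ _).trans hw)
  simp only [smul_eq_mul] at hac hbc
  rw [show b / (a + b) * c + a / (a + b) * (a + b + c) = a + c by field_simp; ring] at hac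
  rw [show a / (a + b) * c + b / (a + b) * (a + b + c) = b + c by field_simp; ring] at hbc
  linear_combination hac + hbc + (φ c + φ (a + b + c)) * hw

theorem MeasureTheory.MemLp.integrable_rpow_of_nonneg {α : Type*} [MeasurableSpace α]
    {μ : Measure α} {u : α → ℝ} {p : ℝ} (hp : 0 < p) (hu : MemLp u (ENNReal.ofReal p) μ)
    (hu0 : ∀ᵐ x ∂μ, 0 ≤ u x) :
    Integrable (fun x => u x ^ p) μ := by
  have h := hu.integrable_norm_rpow (by simpa using hp) ENNReal.ofReal_ne_top
  rw [ENNReal.toReal_ofReal hp.le] at h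
  refine h.congr ?_
  filter_upwards [hu0] with x hx
  rw [Real.norm_eq_abs, abs_of_nonneg hx]

theorem integral_add_rpow_add_le {α : Type*} [MeasurableSpace α] {μ : Measure α} {p : ℝ}
    (hp : 1 ≤ p) {f g h : α → ℝ} (hf : MemLp f (ENNReal.ofReal p) μ)
    (hg : MemLp g (ENNReal.ofReal p) μ) (hh : MemLp h (ENNReal.ofReal p) μ)
    (hf0 : ∀ᵐ x ∂μ, 0 ≤ f x) (hg0 : ∀ᵐ x ∂μ, 0 ≤ g x) (hh0 : ∀ᵐ x ∂μ, 0 ≤ h x) :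
    (∫ x, (f x + h x) ^ p ∂μ) + (∫ x, (g x + h x) ^ p ∂μ) ≤
      (∫ x, (f x + g x + h x) ^ p ∂μ) + ∫ x, h x ^ p ∂μ := by
  have hp0 : 0 < p := by linarith
  have ifh := MemLp.integrable_rpow_of_nonneg (u := fun x => f x + h x) hp0 (hf.add hh)
    (by filter_upwards [hf0, hh0] with x hfx hhx using add_nonneg hfx hhx)
  have igh := MemLp.integrable_rpow_of_nonneg (u := fun x => g x + h x) hp0 (hg.add hh)
    (by filter_upwards [hg0, hh0] with x hgx hhx using add_nonneg hgx hhx)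
  have ifgh := MemLp.integrable_rpow_of_nonneg (u := fun x => f x + g x + h x) hp0
    ((hf.add hg).add hh)
    (by filter_upwards [hf0, hg0, hh0] with x hfx hgx hhx using
      add_nonneg (add_nonneg hfx hgx) hhx)
  have ih := hh.integrable_rpow_of_nonneg hp0 hh0
  rw [← integral_add ifh igh, ← integral_add ifgh ih]
  refine integral_mono_ae (ifh.add igh) (ifgh.add ih) ?_
  filter_upwards [hf0, hg0, hh0] with x hfx hgx hhx
  exact (convexOn_rpow hp).map_add_add_map_add_le hfx hgx hhx
    (mem_Ici.2 (add_nonneg (add_nonneg hfx hgx) hhx))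

theorem stmt_11 (p : ℝ) (hp : 1 < p) (f g h : ℝ → ℝ)
    (hf : MemLp f (ENNReal.ofReal p) volume)
    (hg : MemLp g (ENNReal.ofReal p) volume)
    (hh : MemLp h (ENNReal.ofReal p) volume)
    (hf0 : ∀ᵐ x, 0 ≤ f x) (hg0 : ∀ᵐ x, 0 ≤ g x) (hh0 : ∀ᵐ x, 0 ≤ h x) :
    (∫ x, (f x + h x) ^ p) + (∫ x, (g x + h x) ^ p) ≤
      (∫ x, (f x + g x + h x) ^ p) + ∫ x, (h x) ^ p :=
  integral_add_rpow_add_le hp.le hf hg hh hf0 hg0 hh0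
end

section
/- The determinant is strongly superadditive on positive semidefinite matrices: for all real symmetric positive semidefinite N×N matrices A, B, C, det(A+B+C) + det(C) ≥ det(A+C) + det(B+C). -/
/-!
Expanding `det (M + 1)` as the sum of all principal minors of `M` reduces the case `C = 1` to
the superadditivity `det A + det B ≤ det (A + B)` of every nonempty principal minor, the empty
minor contributing `1` on both sides. Superadditivity itself comes from the same expansion:
`det (Y + 1) ≥ 1 + det Y` for `Y ⪰ 0`, since all the other minors are nonnegative, transported
to `A + B` by the congruence `X ↦ A^{-1/2} X A^{-1/2}`. The congruence by `C^{-1/2}` likewise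
reduces a positive definite `C` to `C = 1`, and a semidefinite `C` is the limit of `C + ε • 1`.
-/

open CFC
open scoped MatrixOrder ComplexOrder

variable {n : Type*} [Fintype n] [DecidableEq n]

namespace Matrix

theorem det_add_one_eq_sum_det_submatrix {R : Type*} [CommRing R] (M : Matrix n n R) :
    (M + 1).det = ∑ s : Finset n, (M.submatrix ((↑) : s → n) (↑)).det :=
  (detRowAlternating.map_add_univ M.row (1 : Matrix n n R).row).trans <|
    Finset.sum_congr rfl fun s _ => det_piecewise_one_eq_submatrix_det M s

theorem PosSemidef.one_add_det_le_det_add_one [Nonempty n] {S : Matrix n n ℝ}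
    (hS : S.PosSemidef) : 1 + S.det ≤ (S + 1).det := by
  have hminor (s : Finset n) : 0 ≤ (S.submatrix ((↑) : s → n) (↑)).det :=
    (hS.submatrix _).det_nonneg
  have hempty : (S.submatrix ((↑) : (∅ : Finset n) → n) (↑)).det = 1 := det_isEmpty
  have huniv : (S.submatrix ((↑) : ((Finset.univ : Finset n) : Type _) → n) (↑)).det = S.det :=
    det_submatrix_equiv_self (Equiv.subtypeUnivEquiv Finset.mem_univ) S
  rw [det_add_one_eq_sum_det_submatrix, ← hempty, ← huniv]
  exact Finset.add_le_sum (fun s _ => hminor s) (Finset.mem_univ _) (Finset.mem_univ _)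
    Finset.univ_nonempty.ne_empty.symm

theorem det_conjSqrt {𝕜 : Type*} [RCLike 𝕜] {c : Matrix n n 𝕜} (hc : 0 ≤ c)
    (a : Matrix n n 𝕜) : (conjSqrt c a).det = c.det * a.det := by
  conv_rhs => rw [← sqrt_mul_sqrt_self c hc, det_mul]
  rw [conjSqrt_apply, det_mul, det_mul]
  ring

theorem PosDef.exists_posSemidef_conjSqrt_eq {𝕜 : Type*} [RCLike 𝕜] {C X : Matrix n n 𝕜}
    (hC : C.PosDef) (hX : X.PosSemidef) :
    ∃ Y : Matrix n n 𝕜, Y.PosSemidef ∧ conjSqrt C Y = X := by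
  have hC' := hC.isStrictlyPositive
  refine ⟨conjSqrt (Ring.inverse C) X, ?_, conjSqrt_conjSqrt_ringInverse C X⟩
  rw [← nonneg_iff_posSemidef]
  simpa using conjSqrt_monotone hX.nonneg

theorem PosDef.det_add_det_le_det_add [Nonempty n] {A B : Matrix n n ℝ} (hA : A.PosDef)
    (hB : B.PosSemidef) : A.det + B.det ≤ (A + B).det := by
  obtain ⟨Y, hY, rfl⟩ := hA.exists_posSemidef_conjSqrt_eq hB
  have hA' : 0 ≤ A := hA.posSemidef.nonneg
  have hsum : A + conjSqrt A Y = conjSqrt A (Y + 1) := by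
    rw [map_add, conjSqrt_one A hA', add_comm]
  rw [hsum, det_conjSqrt hA', det_conjSqrt hA', ← mul_one_add]
  exact mul_le_mul_of_nonneg_left hY.one_add_det_le_det_add_one hA.det_pos.le

theorem PosSemidef.det_add_det_le_det_add [Nonempty n] {A B : Matrix n n ℝ} (hA : A.PosSemidef)
    (hB : B.PosSemidef) : A.det + B.det ≤ (A + B).det := by
  by_cases hdA : A.det = 0
  · by_cases hdB : B.det = 0
    · simpa [hdA, hdB] using (hA.add hB).det_nonneg
    · rw [add_comm A, add_comm A.det]
      exact (hB.posDef_iff_det_ne_zero.mpr hdB).det_add_det_le_det_add hA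
  · exact (hA.posDef_iff_det_ne_zero.mpr hdA).det_add_det_le_det_add hB

theorem PosSemidef.det_add_one_add_det_add_one_le {A B : Matrix n n ℝ} (hA : A.PosSemidef)
    (hB : B.PosSemidef) : (A + 1).det + (B + 1).det ≤ (A + B + 1).det + 1 := by
  have hminor (s : Finset n) (hs : s ≠ ∅) :
      (A.submatrix ((↑) : s → n) (↑)).det + (B.submatrix ((↑) : s → n) (↑)).det ≤
        ((A + B).submatrix ((↑) : s → n) (↑)).det := by
    have : Nonempty s := (Finset.nonempty_iff_ne_empty.mpr hs).to_subtype
    simpa only [submatrix_add, Pi.add_apply] using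
      (hA.submatrix _).det_add_det_le_det_add (hB.submatrix _)
  simp only [det_add_one_eq_sum_det_submatrix,
    ← Finset.add_sum_erase _ _ (Finset.mem_univ (∅ : Finset n)), det_isEmpty]
  have hsum := Finset.sum_le_sum (s := Finset.univ.erase ∅) fun s hs =>
    hminor s (Finset.ne_of_mem_erase hs)
  rw [Finset.sum_add_distrib] at hsum
  linarith

theorem PosSemidef.det_add_add_det_add_le_of_posDef {A B C : Matrix n n ℝ} (hA : A.PosSemidef)
    (hB : B.PosSemidef) (hC : C.PosDef) :
    (A + C).det + (B + C).det ≤ (A + B + C).det + C.det := by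
  obtain ⟨A', hA', rfl⟩ := hC.exists_posSemidef_conjSqrt_eq hA
  obtain ⟨B', hB', rfl⟩ := hC.exists_posSemidef_conjSqrt_eq hB
  have hC' : 0 ≤ C := hC.posSemidef.nonneg
  have hconj (X : Matrix n n ℝ) : conjSqrt C X + C = conjSqrt C (X + 1) := by
    rw [map_add, conjSqrt_one C hC']
  rw [hconj, hconj, ← map_add, hconj, det_conjSqrt hC', det_conjSqrt hC', det_conjSqrt hC',
    ← mul_add, ← mul_add_one]
  exact mul_le_mul_of_nonneg_left (hA'.det_add_one_add_det_add_one_le hB') hC.det_pos.le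

theorem PosSemidef.det_add_add_det_add_le {A B C : Matrix n n ℝ} (hA : A.PosSemidef)
    (hB : B.PosSemidef) (hC : C.PosSemidef) :
    (A + C).det + (B + C).det ≤ (A + B + C).det + C.det := by
  let Cε (ε : ℝ) : Matrix n n ℝ := C + ε • 1
  have hpos : ∀ ε ∈ Set.Ioi (0 : ℝ),
      (A + Cε ε).det + (B + Cε ε).det ≤ (A + B + Cε ε).det + (Cε ε).det := fun ε hε =>
    hA.det_add_add_det_add_le_of_posDef hB (PosDef.posSemidef_add hC (PosDef.one.smul hε))
  have hzero : (0 : ℝ) ∈ closure (Set.Ioi 0) := by simp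
  simpa [Cε] using ContinuousWithinAt.closure_le hzero (by fun_prop) (by fun_prop) hpos

end Matrix

theorem stmt_12 (N : ℕ) (A B C : Matrix (Fin N) (Fin N) ℝ)
    (hA : A.PosSemidef) (hB : B.PosSemidef) (hC : C.PosSemidef) :
    (A + C).det + (B + C).det ≤ (A + B + C).det + C.det :=
  hA.det_add_add_det_add_le hB hC
end

section
/- If U and V are real symmetric positive definite N×N matrices with U ≤ V in the Löwner order, then det(U)·trace(U⁻¹) ≤ det(V)·trace(V⁻¹). -/
/-!
For invertible `A`, `det A • A⁻¹ = adj A`, so `det A · tr A⁻¹ = tr (adj A)` is the sum of the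
principal `(N-1)`-minors of `A`. Principal submatrices inherit both positive definiteness and the
Löwner inequality `U ≤ V`, and `det` is monotone on positive definite matrices, so the two sums
compare term by term.
-/
open Matrix
open scoped MatrixOrder

namespace Matrix

section
variable {n : Type*} [Fintype n] [DecidableEq n]

lemma IsHermitian.one_le_eigenvalues {A : Matrix n n ℝ} (hA : A.IsHermitian) (h : 1 ≤ A)
    (i : n) : 1 ≤ hA.eigenvalues i :=
  (algebraMap_le_iff_le_spectrum hA.isSelfAdjoint).mp (by simpa using h) _
    (hA.eigenvalues_mem_spectrum_real i)

lemma one_le_det_of_one_le {A : Matrix n n ℝ} (h : 1 ≤ A) : 1 ≤ A.det := by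
  have hA : A.IsHermitian := by simpa using (le_iff.mp h).isHermitian.add isHermitian_one
  rw [hA.det_eq_prod_eigenvalues]
  exact_mod_cast Finset.one_le_prod fun i _ => hA.one_le_eigenvalues h i

/-- Congruence by `A^{-1/2}` reduces the monotonicity of `det` to the case `A = 1`. -/
lemma PosDef.det_le_det_of_le {A B : Matrix n n ℝ} (hA : A.PosDef) (h : A ≤ B) :
    A.det ≤ B.det := by
  set S := CFC.sqrt A
  have hSS : S * S = A := CFC.sqrt_mul_sqrt_self A hA.posSemidef.nonneg
  have hdetA : A.det = S.det * S.det := by rw [← hSS, det_mul]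
  have hS : IsUnit S.det := isUnit_iff_ne_zero.mpr fun h0 => by
    simpa [hdetA, h0] using hA.det_pos
  have hSinv : IsSelfAdjoint S⁻¹ := (CFC.sqrt_nonneg A).posSemidef.isHermitian.inv
  have hconj : S⁻¹ * A * S⁻¹ = 1 := by
    rw [← hSS, ← mul_assoc, nonsing_inv_mul S hS, one_mul, mul_nonsing_inv S hS]
  have hone : 1 ≤ (S⁻¹ * B * S⁻¹).det :=
    one_le_det_of_one_le (hconj ▸ hSinv.conjugate_le_conjugate h)
  rw [det_mul, det_mul, det_nonsing_inv, Ring.inverse_eq_inv'] at hone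
  have hpos : 0 < S.det * S.det := hdetA ▸ hA.det_pos
  calc A.det = S.det * S.det * 1 := by rw [hdetA, mul_one]
    _ ≤ S.det * S.det * (S.det⁻¹ * B.det * S.det⁻¹) := by gcongr
    _ = B.det := by field_simp [hS.ne_zero]
end

lemma det_mul_trace_inv_eq_trace_adjugate {n : Type*} [Fintype n] [DecidableEq n]
    {R : Type*} [CommRing R] {A : Matrix n n R} (h : IsUnit A.det) :
    A.det * A⁻¹.trace = A.adjugate.trace := by
  rw [inv_def, trace_smul, smul_eq_mul, ← mul_assoc, Ring.mul_inverse_cancel _ h, one_mul]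

lemma trace_adjugate_fin_succ_eq_sum_det_submatrix {n : ℕ} {R : Type*} [CommRing R]
    (A : Matrix (Fin (n + 1)) (Fin (n + 1)) R) :
    A.adjugate.trace = ∑ i : Fin (n + 1), (A.submatrix i.succAbove i.succAbove).det := by
  refine Finset.sum_congr rfl fun i _ => ?_
  rw [diag_apply, adjugate_fin_succ_eq_det_submatrix, Even.neg_one_pow ⟨i, rfl⟩, one_mul]

end Matrix

theorem stmt_13_general (N : ℕ) (U V : Matrix (Fin N) (Fin N) ℝ)
    (hU : U.PosDef) (hUV : (V - U).PosSemidef) :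
    U.det * (U⁻¹).trace ≤ V.det * (V⁻¹).trace := by
  have hV : V.PosDef := by simpa using hU.add_posSemidef hUV
  cases N with
  | zero => simp [trace]
  | succ n =>
    rw [det_mul_trace_inv_eq_trace_adjugate hU.det_pos.ne'.isUnit,
      det_mul_trace_inv_eq_trace_adjugate hV.det_pos.ne'.isUnit,
      trace_adjugate_fin_succ_eq_sum_det_submatrix, trace_adjugate_fin_succ_eq_sum_det_submatrix]
    exact Finset.sum_le_sum fun i _ =>
      (hU.submatrix Fin.succAbove_right_injective).det_le_det_of_le (hUV.submatrix i.succAbove)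

theorem stmt_13 (N : ℕ) (U V : Matrix (Fin N) (Fin N) ℝ)
    (hU : U.PosDef) (hV : V.PosDef) (hUV : (V - U).PosSemidef) :
    U.det * (U⁻¹).trace ≤ V.det * (V⁻¹).trace :=
  stmt_13_general N U V hU hUV
end

section
/- The log-sum-exp function is comonotonic strongly superadditive: for all x, y, z ∈ ℝ₊ᴺ with x and y comonotonic (i.e., (x_i − x_j)(y_i − y_j) ≥ 0 for all i, j), one has LSE(x+y+z) + LSE(z) ≥ LSE(x+z) + LSE(y+z), where LSE(u) = log((1/N)∑_k e^{u_k}). -/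
noncomputable def LSE {N : ℕ} (x : Fin N → ℝ) : ℝ :=
  Real.log ((1 / (N : ℝ)) * ∑ k, Real.exp (x k))

/-! Write `∑ exp (x + z) = ∑ exp x * exp z`, a sum of `exp x` weighted by `exp z`, and likewise for
`y + z` and `x + y + z`. Since `exp` is increasing, `exp x` and `exp y` are still comonotonic, so
the weighted Chebyshev inequality gives
`(∑ exp (x + z)) * (∑ exp (y + z)) ≤ (∑ exp (x + y + z)) * ∑ exp z`.
Taking logarithms yields the claim, the normalising `log N` terms cancelling on both sides. -/

open Finset Real

section Chebyshev

variable {ι α : Type*} [CommRing α] [LinearOrder α] [IsStrictOrderedRing α]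
  {s : Finset ι} {f g w : ι → α}

theorem MonovaryOn.sum_mul_sum_le_sum_mul_sum_weighted (hfg : MonovaryOn f g s)
    (hw : ∀ i ∈ s, 0 ≤ w i) :
    (∑ i ∈ s, f i * w i) * ∑ i ∈ s, g i * w i ≤ (∑ i ∈ s, f i * g i * w i) * ∑ i ∈ s, w i := by
  have hsum : 0 ≤ ∑ i ∈ s, ∑ j ∈ s, w i * w j * ((f j - f i) * (g j - g i)) :=
    sum_nonneg fun i hi ↦ sum_nonneg fun j hj ↦
      mul_nonneg (mul_nonneg (hw i hi) (hw j hj)) (hfg.sub_mul_sub_nonneg hi hj)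
  have hterm : ∀ i j, w i * w j * ((f j - f i) * (g j - g i)) =
      w i * (f j * g j * w j) - g i * w i * (f j * w j) - f i * w i * (g j * w j) +
        f i * g i * w i * w j := fun i j ↦ by ring
  have hexpand : ∑ i ∈ s, ∑ j ∈ s, w i * w j * ((f j - f i) * (g j - g i)) =
      2 * ((∑ i ∈ s, f i * g i * w i) * ∑ i ∈ s, w i -
        (∑ i ∈ s, f i * w i) * ∑ i ∈ s, g i * w i) := by
    simp only [hterm, sum_add_distrib, sum_sub_distrib, ← mul_sum, ← sum_mul]
    ring
  linarith

end Chebyshev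

theorem Monovary.sum_exp_add_mul_sum_exp_add_le {ι : Type*} [Fintype ι] {x y : ι → ℝ}
    (hxy : Monovary x y) (z : ι → ℝ) :
    (∑ k, exp ((x + z) k)) * ∑ k, exp ((y + z) k) ≤
      (∑ k, exp ((x + y + z) k)) * ∑ k, exp (z k) := by
  have hexp : Monovary (exp ∘ x) (exp ∘ y) := fun _ _ hij ↦
    hxy.comp_monotone_left exp_monotone (exp_lt_exp.1 hij)
  simpa only [Pi.add_apply, exp_add, Function.comp_apply] using
    (hexp.monovaryOn (univ : Finset ι)).sum_mul_sum_le_sum_mul_sum_weighted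
      (w := exp ∘ z) fun k _ ↦ (exp_pos _).le

theorem LSE_eq_log_sum_exp_sub_log {N : ℕ} (x : Fin N → ℝ) :
    LSE x = log (∑ k, exp (x k)) - log N := by
  rcases N.eq_zero_or_pos with rfl | hN
  · simp [LSE]
  have : Nonempty (Fin N) := ⟨⟨0, hN⟩⟩
  rw [LSE, log_mul (by positivity) (by positivity), one_div, log_inv]
  ring

theorem stmt_17_general (N : ℕ) (x y z : Fin N → ℝ)
    (hcom : ∀ i j, 0 ≤ (x i - x j) * (y i - y j)) :
    LSE (x + z) + LSE (y + z) ≤ LSE (x + y + z) + LSE z := by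
  rcases N.eq_zero_or_pos with rfl | hN
  · simp [LSE]
  have : Nonempty (Fin N) := ⟨⟨0, hN⟩⟩
  have hxy : Monovary x y := monovary_iff_forall_mul_nonneg.2 fun i j ↦ hcom j i
  have hlog := log_le_log (by positivity) (hxy.sum_exp_add_mul_sum_exp_add_le z)
  rw [log_mul (by positivity) (by positivity), log_mul (by positivity) (by positivity)] at hlog
  simp only [LSE_eq_log_sum_exp_sub_log]
  linarith

theorem stmt_17 (N : ℕ) (x y z : Fin N → ℝ)
    (hx : ∀ k, 0 ≤ x k) (hy : ∀ k, 0 ≤ y k) (hz : ∀ k, 0 ≤ z k)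
    (hcom : ∀ i j, 0 ≤ (x i - x j) * (y i - y j)) :
    LSE (x + z) + LSE (y + z) ≤ LSE (x + y + z) + LSE z :=
  stmt_17_general N x y z hcom
end

section
/- Let C be a convex cone in a real vector space and Φ : C → ℝ≥0 be strongly superadditive (Φ(x+y+z) + Φ(z) ≥ Φ(x+z) + Φ(y+z)) and monotone (x ≤ y in C implies Φ(x) ≤ Φ(y), where x ≤ y means y − x ∈ C). Then for every nondecreasing convex function f defined on an interval containing the range of Φ, and all x, y, z ∈ C: f(Φ(x+y+z)) + f(Φ(z)) ≥ f(Φ(x+z)) + f(Φ(y+z)). -/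
/-!
Weak majorization: the pair `(Φ (x + z), Φ (y + z))` is dominated entrywise by `Φ (x + y + z)` (by
monotonicity) and in sum by `Φ (x + y + z) + Φ z` (by strong superadditivity). For two points this
already forces `f a + f b ≤ f B + f s` for every nondecreasing convex `f` (Tomić–Weyl): when the
smaller of `a, b` lies above `s`, push the larger one up to `a + b - s ≤ B`, use convexity for the
pair with equal sums, then monotonicity.
-/

section TwoPointMajorization

variable {𝕜 β : Type*} [Field 𝕜] [LinearOrder 𝕜] [IsStrictOrderedRing 𝕜]
  [AddCommGroup β] [PartialOrder β] [IsOrderedAddMonoid β] [Module 𝕜 β]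
  {S : Set 𝕜} {f : 𝕜 → β}

theorem ConvexOn.add_le_add_of_add_eq (hf : ConvexOn 𝕜 S f) {a b s B : 𝕜} (hs : s ∈ S)
    (hB : B ∈ S) (hsa : s ≤ a) (haB : a ≤ B) (hab : a + b = s + B) :
    f a + f b ≤ f s + f B := by
  rcases haB.eq_or_lt with rfl | haB
  · obtain rfl : b = s := by linarith
    rw [add_comm]
  have hBs : 0 < B - s := by linarith
  set t := (a - s) / (B - s)
  have ht₀ : 0 ≤ t := div_nonneg (by linarith) hBs.le
  have ht₁ : t ≤ 1 := (div_le_one hBs).2 (by linarith)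
  have ha : (1 - t) • s + t • B = a := by
    simp only [smul_eq_mul, t]; field_simp; ring
  have hb : t • s + (1 - t) • B = b := by
    simp only [smul_eq_mul, t]; field_simp; linear_combination (s - B) * hab
  have hfa := hf.2 hs hB (sub_nonneg.2 ht₁) ht₀ (sub_add_cancel 1 t)
  have hfb := hf.2 hs hB ht₀ (sub_nonneg.2 ht₁) (add_sub_cancel t 1)
  rw [ha] at hfa
  rw [hb] at hfb
  calc f a + f b ≤ ((1 - t) • f s + t • f B) + (t • f s + (1 - t) • f B) := add_le_add hfa hfb
    _ = f s + f B := by module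

theorem ConvexOn.add_le_add_of_weakMajorization (hf : ConvexOn 𝕜 S f) (hmono : MonotoneOn f S)
    {a b B s : 𝕜} (ha : a ∈ S) (hb : b ∈ S) (hB : B ∈ S) (hs : s ∈ S)
    (haB : a ≤ B) (hbB : b ≤ B) (hsum : a + b ≤ B + s) :
    f a + f b ≤ f B + f s := by
  wlog hba : b ≤ a generalizing a b
  · rw [add_comm (f a)]
    exact this hb ha hbB haB (by linarith) (by linarith)
  rcases le_or_gt b s with hbs | hsb
  · exact add_le_add (hmono ha hB haB) (hmono hb hs hbs)
  have ha'B : a + b - s ≤ B := by linarith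
  have ha' : a + b - s ∈ S := hf.1.ordConnected.out ha hB ⟨by linarith, ha'B⟩
  calc f a + f b ≤ f s + f (a + b - s) :=
        hf.add_le_add_of_add_eq hs ha' (hsb.le.trans hba) (by linarith) (by ring)
    _ ≤ f s + f B := add_le_add_right (hmono ha' hB ha'B) _
    _ = f B + f s := add_comm _ _

end TwoPointMajorization

theorem stmt_19_general (V : Type*) [AddCommGroup V] [Module ℝ V]
    (C : ConvexCone ℝ V) (Φ : V → ℝ)
    (hsuper : ∀ x ∈ C, ∀ y ∈ C, ∀ z ∈ C,
      Φ (x + z) + Φ (y + z) ≤ Φ (x + y + z) + Φ z)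
    (hmono : ∀ x ∈ C, ∀ y ∈ C, y - x ∈ C → Φ x ≤ Φ y)
    (S : Set ℝ) (hrange : ∀ x ∈ C, Φ x ∈ S)
    (f : ℝ → ℝ) (hconv : ConvexOn ℝ S f) (hf : MonotoneOn f S) :
    ∀ x ∈ C, ∀ y ∈ C, ∀ z ∈ C,
      f (Φ (x + z)) + f (Φ (y + z)) ≤ f (Φ (x + y + z)) + f (Φ z) := by
  intro x hx y hy z hz
  have hxz : x + z ∈ C := C.add_mem hx hz
  have hyz : y + z ∈ C := C.add_mem hy hz
  have hxyz : x + y + z ∈ C := C.add_mem (C.add_mem hx hy) hz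
  have hxz_le : Φ (x + z) ≤ Φ (x + y + z) :=
    hmono _ hxz _ hxyz (by rwa [show x + y + z - (x + z) = y by abel])
  have hyz_le : Φ (y + z) ≤ Φ (x + y + z) :=
    hmono _ hyz _ hxyz (by rwa [show x + y + z - (y + z) = x by abel])
  exact hconv.add_le_add_of_weakMajorization hf (hrange _ hxz) (hrange _ hyz) (hrange _ hxyz)
    (hrange _ hz) hxz_le hyz_le (hsuper x hx y hy z hz)

theorem stmt_19 (V : Type*) [AddCommGroup V] [Module ℝ V]
    (C : ConvexCone ℝ V) (Φ : V → ℝ)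
    (hpos : ∀ x ∈ C, 0 ≤ Φ x)
    (hsuper : ∀ x ∈ C, ∀ y ∈ C, ∀ z ∈ C,
      Φ (x + z) + Φ (y + z) ≤ Φ (x + y + z) + Φ z)
    (hmono : ∀ x ∈ C, ∀ y ∈ C, y - x ∈ C → Φ x ≤ Φ y)
    (S : Set ℝ) (hS : Convex ℝ S) (hrange : ∀ x ∈ C, Φ x ∈ S)
    (f : ℝ → ℝ) (hconv : ConvexOn ℝ S f) (hf : MonotoneOn f S) :
    ∀ x ∈ C, ∀ y ∈ C, ∀ z ∈ C,
      f (Φ (x + z)) + f (Φ (y + z)) ≤ f (Φ (x + y + z)) + f (Φ z) :=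
  stmt_19_general V C Φ hsuper hmono S hrange f hconv hf
end
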